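/- Let F = g₀·∂/∂x + g₁·∂/∂y₁ + g₂·∂/∂y₂ be a singular formal vector field on ℂ³ with F(𝔪) ⊆ 𝔪². Then the following are equivalent: (1) the formal diffeomorphism exp(F) is transversally symplectic; (2) g₀ = 0 and F is transversally Hamiltonian, i.e. g₀ = 0 and ∂g₁/∂y₁ + ∂g₂/∂y₂ = 0. -/

import Mathlib

open MvPowerSeries

noncomputable section

/-- `R3` is the ring `ℂ[[x, y₁, y₂]]` of formal power series in three variables, where
variable `0` plays the role of `x`, variable `1` of `y₁` and variable `2` of `y₂`. -/
abbrev R3 : Type := MvPowerSeries (Fin 3) ℂ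

/-- Build a formal power series from its coefficient function. -/
def mk3 (g : (Fin 3 →₀ ℕ) → ℂ) : R3 := g

/-- Coefficient of the monomial with exponents `m` in `f`. -/
def cf (m : Fin 3 →₀ ℕ) (f : R3) : ℂ := MvPowerSeries.coeff (R := ℂ) m f

/-- The exponent vector of the monomial `x^{k₀} y₁^{k₁} y₂^{k₂}`. -/
def e (k₀ k₁ k₂ : ℕ) : Fin 3 →₀ ℕ :=
  Finsupp.single 0 k₀ + Finsupp.single 1 k₁ + Finsupp.single 2 k₂

/-- Formal partial derivative with respect to the `i`-th variable. -/
def pd (i : Fin 3) (f : R3) : R3 :=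
  mk3 fun m => ((m i : ℂ) + 1) * cf (m + Finsupp.single i 1) f

/-- The formal vector field (derivation) `b 0 · ∂/∂x + b 1 · ∂/∂y₁ + b 2 · ∂/∂y₂`. -/
def VF (b : Fin 3 → R3) (f : R3) : R3 := ∑ i : Fin 3, b i * pd i f

/-- The maximal ideal `𝔪` of `ℂ[[x,y₁,y₂]]` (series with zero constant term). -/
def mI : Ideal R3 := RingHom.ker (MvPowerSeries.constantCoeff (σ := Fin 3) (R := ℂ))

/-- The variables, as power series. -/
def Xv (i : Fin 3) : R3 := MvPowerSeries.X i

/-- Constant power series. -/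
def Cc (a : ℂ) : R3 := MvPowerSeries.C (σ := Fin 3) (R := ℂ) a

/-- The matrix of linear coefficients of a triple of power series. -/
def linM (φ : Fin 3 → R3) : Matrix (Fin 3) (Fin 3) ℂ :=
  Matrix.of fun i j => cf (Finsupp.single j 1) (φ i)

/-- `φ` is a formal diffeomorphism: a triple in `𝔪³` with invertible linear part. -/
def IsDiffeo (φ : Fin 3 → R3) : Prop :=
  (∀ i, MvPowerSeries.constantCoeff (σ := Fin 3) (R := ℂ) (φ i) = 0) ∧ IsUnit (linM φ).det

/-- `φ` is fibered: its first component is the variable `x`. -/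
def IsFibered (φ : Fin 3 → R3) : Prop := φ 0 = Xv 0

/-- Pullback (substitution) action: `pb φ f = f(φ 0, φ 1, φ 2)`, written coefficientwise
(the sum below has only finitely many nonzero terms when each `φ i` has zero constant
term, which is the case for formal diffeomorphisms). -/
def pb (φ : Fin 3 → R3) (f : R3) : R3 :=
  mk3 fun k => ∑' m : Fin 3 →₀ ℕ, cf m f * cf k (∏ i : Fin 3, φ i ^ (m i))

/-- `Φ` conjugates `Y` to `Z` (that is, `Z = Φ_*(Y)`): `Φ*(Z(f)) = Y(Φ*(f))` for all `f`. -/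
def Conj (φ Y Z : Fin 3 → R3) : Prop :=
  ∀ f : R3, pb φ (VF Z f) = VF Y (pb φ f)

/-- The power series `c(y₁ y₂)` obtained from a one-variable series `c` by substituting
`v = y₁ y₂`. -/
def csub (c : PowerSeries ℂ) : R3 :=
  mk3 fun m => if m 0 = 0 ∧ m 1 = m 2 then PowerSeries.coeff (R := ℂ) (m 1) c else 0

/-- Components of the normal form
`x²∂/∂x + (−λ + a₁x + c₁(y₁y₂))y₁∂/∂y₁ + (λ + a₂x + c₂(y₁y₂))y₂∂/∂y₂`. -/
def NF (l a₁ a₂ : ℂ) (c₁ c₂ : PowerSeries ℂ) : Fin 3 → R3 :=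
  ![Xv 0 ^ 2,
    (Cc (-l) + Cc a₁ * Xv 0 + csub c₁) * Xv 1,
    (Cc l + Cc a₂ * Xv 0 + csub c₂) * Xv 2]

/-- Components of a doubly-resonant saddle-node in prepared form
`x²∂/∂x + (−λy₁ + F₁)∂/∂y₁ + (λy₂ + F₂)∂/∂y₂`. -/
def SN (l : ℂ) (F₁ F₂ : R3) : Fin 3 → R3 :=
  ![Xv 0 ^ 2, Cc (-l) * Xv 1 + F₁, Cc l * Xv 2 + F₂]

/-- The residue of the prepared saddle-node with nonlinear parts `F₁, F₂`: the coefficient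
of `x y₁` in `F₁` plus the coefficient of `x y₂` in `F₂`. -/
def resid (F₁ F₂ : R3) : ℂ := cf (e 1 1 0) F₁ + cf (e 1 0 1) F₂

/-- `z` is not a nonpositive rational number. -/
def NotQle0 (z : ℂ) : Prop := ∀ q : ℚ, q ≤ 0 → z ≠ (q : ℂ)

/-- `φ` is transversally symplectic (with respect to `ω = dy₁∧dy₂/x` and `dx`):
it is fibered and `(∂φ₁/∂y₁)(∂φ₂/∂y₂) − (∂φ₁/∂y₂)(∂φ₂/∂y₁) = 1`. -/
def TransSymp (φ : Fin 3 → R3) : Prop :=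
  φ 0 = Xv 0 ∧ pd 1 (φ 1) * pd 2 (φ 2) - pd 2 (φ 1) * pd 1 (φ 2) = 1

/-- `b` depends only on the variable `x`. -/
def OnlyX (b : R3) : Prop := ∀ m : Fin 3 →₀ ℕ, (m 1 ≠ 0 ∨ m 2 ≠ 0) → cf m b = 0

/-- The vector field with components `b` is transversally Hamiltonian (w.r.t.
`ω = dy₁∧dy₂/x` and `dx`): `b 0 ∈ x·ℂ[[x]]` and `x·(∂b₁/∂y₁ + ∂b₂/∂y₂) = b 0`. -/
def TransHam (b : Fin 3 → R3) : Prop :=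
  OnlyX (b 0) ∧ MvPowerSeries.constantCoeff (σ := Fin 3) (R := ℂ) (b 0) = 0 ∧
    Xv 0 * (pd 1 (b 1) + pd 2 (b 2)) = b 0


/-- The exponential of a vector field (with components `g`, `g i ∈ 𝔪²`), as the formal
diffeomorphism `f ↦ ∑ₖ D^{∘k}(f)/k!`, defined coefficientwise. -/
def expD3 (D : R3 → R3) (f : R3) : R3 :=
  mk3 fun m => ∑' k : ℕ, ((k.factorial : ℂ))⁻¹ * cf m (D^[k] f)

/-! The first component of `exp(F)` is `x` iff `F x = g₀` vanishes, because for an operator `D`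
that raises the order of power series, `e^D f = f` iff `D f = 0`: the lowest-order part of
`D f` survives in `e^D f - f`. When `g₀ = 0`, the bracket `{a, b} = ∂₁a ∂₂b - ∂₂a ∂₁b` satisfies
`L {a, b} = {F a, b} + {a, F b}` for `L = F + div F`, so the binomial expansion of `Lⁿ` gives the
Liouville formula `{e^F y₁, e^F y₂} = e^L {y₁, y₂} = e^L 1`. Hence the Jacobian is `1` iff
`L 1 = div F` vanishes. -/

open Finset

namespace MvPowerSeries

variable {σ R : Type*}

theorem pderiv_comm [CommSemiring R] (i j : σ) (f : MvPowerSeries σ R) :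
    pderiv R i (pderiv R j f) = pderiv R j (pderiv R i f) := by
  ext n
  rcases eq_or_ne i j with rfl | hij
  · rfl
  · simp only [coeff_pderiv, add_right_comm n (Finsupp.single i 1), Finsupp.add_apply,
      Finsupp.single_eq_of_ne hij, Finsupp.single_eq_of_ne hij.symm, add_zero]
    ring

theorem order_sub_one_le_order_pderiv [CommSemiring R] (i : σ) (f : MvPowerSeries σ R) :
    f.order - 1 ≤ (pderiv R i f).order := by
  refine le_order fun d hd => ?_
  have hd' : ((d + Finsupp.single i 1).degree : ℕ∞) < f.order := by
    rw [map_add, Finsupp.degree_single]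
    exact lt_tsub_iff_right.mp hd
  rw [coeff_pderiv, coeff_of_lt_order hd', zero_mul]

theorem le_order_sum [Semiring R] {ι : Type*} (s : Finset ι) (f : ι → MvPowerSeries σ R)
    {n : ℕ∞} (h : ∀ i ∈ s, n ≤ (f i).order) : n ≤ (∑ i ∈ s, f i).order := by
  refine le_order fun d hd => ?_
  rw [map_sum]
  exact sum_eq_zero fun i hi => coeff_of_lt_order (hd.trans_le (h i hi))

theorem eq_zero_of_le_order_imp_succ_le [Semiring R] {f : MvPowerSeries σ R}
    (h : ∀ n : ℕ, (n : ℕ∞) ≤ f.order → (n + 1 : ℕ∞) ≤ f.order) : f = 0 := by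
  rw [← order_eq_top_iff, ENat.eq_top_iff_forall_ge]
  intro n
  induction n with
  | zero => simp
  | succ n ih => exact_mod_cast h n ih

end MvPowerSeries

theorem Finset.sum_range_antidiagonal_eq_sum_filter {M : Type*} [AddCommMonoid M]
    (F : ℕ → ℕ → M) (N : ℕ) :
    ∑ n ∈ range N, ∑ ij ∈ antidiagonal n, F ij.1 ij.2 =
      ∑ ij ∈ range N ×ˢ range N with ij.1 + ij.2 < N, F ij.1 ij.2 := by
  rw [← sum_fiberwise_of_maps_to (g := fun ij : ℕ × ℕ => ij.1 + ij.2) (t := range N)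
    (fun ij hij => by simpa using (mem_filter.1 hij).2)]
  refine sum_congr rfl fun n hn => sum_congr ?_ fun _ _ => rfl
  ext ⟨i, j⟩
  simp only [HasAntidiagonal.mem_antidiagonal, mem_filter, mem_product, mem_range] at hn ⊢
  omega

theorem Nat.inv_factorial_add_mul_choose {K : Type*} [Field K] [CharZero K] (i j : ℕ) :
    (((i + j).factorial : K))⁻¹ * ((i + j).choose i : K) =
      ((i.factorial : K))⁻¹ * ((j.factorial : K))⁻¹ := by
  rw [Nat.cast_add_choose, mul_div, inv_mul_cancel₀ (Nat.cast_ne_zero.2 (Nat.factorial_ne_zero _)),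
    one_div, mul_inv]

theorem iterate_map_eq_sum_antidiagonal_choose {M N P F : Type*} [AddCommMonoid P]
    [FunLike F P P] [AddMonoidHomClass F P P] (L : F) (D : M → M) (E : N → N) (B : M → N → P)
    (hB : ∀ a b, L (B a b) = B (D a) b + B a (E b)) (n : ℕ) (a : M) (b : N) :
    L^[n] (B a b) = ∑ ij ∈ antidiagonal n, n.choose ij.1 • B (D^[ij.1] a) (E^[ij.2] b) := by
  induction n with
  | zero => simp
  | succ n ih =>
    rw [sum_antidiagonal_choose_succ_nsmul (fun i j => B (D^[i] a) (E^[j] b)) n]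
    simp only [Function.iterate_succ_apply', ih, map_sum, map_nsmul, hB, smul_add,
      sum_add_distrib, add_comm]
    congr 1
    refine sum_congr rfl fun ⟨i, j⟩ hij => ?_
    rw [n.choose_symm_of_eq_add (HasAntidiagonal.mem_antidiagonal.1 hij).symm]

def RaisesOrder {σ R : Type*} [Semiring R] (D : MvPowerSeries σ R → MvPowerSeries σ R) : Prop :=
  ∀ f, f.order + 1 ≤ (D f).order

namespace RaisesOrder

variable {σ R : Type*} [Semiring R] {D : MvPowerSeries σ R → MvPowerSeries σ R}

theorem map_zero (hD : RaisesOrder D) : D 0 = 0 := by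
  simpa using hD 0

theorem le_order_iterate (hD : RaisesOrder D) (f : MvPowerSeries σ R) (k : ℕ) :
    f.order + k ≤ (D^[k] f).order := by
  induction k with
  | zero => simp
  | succ k ih =>
    rw [Function.iterate_succ_apply', Nat.cast_succ, ← add_assoc]
    exact (by gcongr : f.order + k + 1 ≤ _ + 1).trans (hD _)

theorem add_mul {c : MvPowerSeries σ R} (hD : RaisesOrder D) (hc : 1 ≤ c.order) :
    RaisesOrder fun f => D f + c * f := by
  intro f
  have hcf : f.order + 1 ≤ (c * f).order :=
    calc f.order + 1 ≤ c.order + f.order := by rw [add_comm]; gcongr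
      _ ≤ (c * f).order := le_order_mul
  exact (le_min (hD f) hcf).trans min_order_le_add

end RaisesOrder

def expTrunc (D : R3 → R3) (N : ℕ) (f : R3) : R3 :=
  ∑ k ∈ range N, ((k.factorial : ℂ))⁻¹ • D^[k] f

theorem order_expD3_sub_expTrunc {D : R3 → R3} (hD : RaisesOrder D) (f : R3) (N : ℕ) :
    (N : ℕ∞) ≤ (expD3 D f - expTrunc D N f).order := by
  refine le_order fun d hd => ?_
  have hvan : ∀ k ∉ range N, ((k.factorial : ℂ))⁻¹ * coeff d (D^[k] f) = 0 := fun k hk => by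
    rw [coeff_of_lt_order, mul_zero]
    calc (d.degree : ℕ∞) < N := hd
      _ ≤ k := by simpa using hk
      _ ≤ f.order + k := le_add_self
      _ ≤ _ := hD.le_order_iterate f k
  rw [expTrunc, map_sub, map_sum, sub_eq_zero]
  simp only [coeff_smul]
  exact tsum_eq_sum hvan

theorem expD3_eq_self_iff {D : R3 → R3} (hD : RaisesOrder D) {f : R3} :
    expD3 D f = f ↔ D f = 0 := by
  refine ⟨fun h => eq_zero_of_le_order_imp_succ_le fun n hn => ?_, fun h => ?_⟩
  · set T := ∑ k ∈ range n, (((k + 2).factorial : ℂ))⁻¹ • D^[k + 2] f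
    have hT : (n + 1 : ℕ∞) ≤ T.order := by
      refine le_order_sum _ _ fun k _ => le_order_smul.trans' ?_
      rw [Function.iterate_succ_apply]
      calc (n + 1 : ℕ∞) ≤ (D f).order + (k + 1 : ℕ) := by push_cast; gcongr; exact le_add_self
        _ ≤ _ := hD.le_order_iterate _ _
    have hsplit : D f = -(expD3 D f - expTrunc D (n + 2) f) - T := by
      rw [h, expTrunc, sum_range_succ', sum_range_succ']
      simp only [T, Function.iterate_zero, Function.iterate_one, id, Nat.factorial_zero,
        Nat.factorial_one, Nat.cast_one, inv_one, one_smul, zero_add]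
      abel
    rw [hsplit, sub_eq_add_neg]
    refine le_trans ?_ min_order_le_add
    rw [order_neg, order_neg]
    refine le_min (le_trans ?_ (order_expD3_sub_expTrunc hD f (n + 2))) hT
    push_cast; gcongr; norm_num
  · ext d
    refine (tsum_eq_single 0 fun k hk => ?_).trans (by simp [cf])
    obtain ⟨k, rfl⟩ := Nat.exists_eq_succ_of_ne_zero hk
    simp [cf, Function.iterate_succ_apply, h, Function.iterate_fixed hD.map_zero]

theorem pd_eq_pderiv (i : Fin 3) : pd i = pderiv ℂ i := by
  funext f
  ext m
  rw [coeff_pderiv, mul_comm]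
  rfl

def poisson : R3 →ₗ[ℂ] R3 →ₗ[ℂ] R3 :=
  (LinearMap.mul ℂ R3).compl₁₂ (pderiv ℂ 1).toLinearMap (pderiv ℂ 2).toLinearMap -
    (LinearMap.mul ℂ R3).compl₁₂ (pderiv ℂ 2).toLinearMap (pderiv ℂ 1).toLinearMap

theorem poisson_apply (a b : R3) :
    poisson a b = pderiv ℂ 1 a * pderiv ℂ 2 b - pderiv ℂ 2 a * pderiv ℂ 1 b := rfl

theorem poisson_X_one_X_two : poisson (X 1) (X 2) = 1 := by
  simp [poisson_apply]

theorem order_poisson_ge (a b : R3) : a.order - 1 + (b.order - 1) ≤ (poisson a b).order := by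
  have h : ∀ i j : Fin 3,
      a.order - 1 + (b.order - 1) ≤ (pderiv ℂ i a * pderiv ℂ j b).order := fun i j =>
    (add_le_add (order_sub_one_le_order_pderiv i a) (order_sub_one_le_order_pderiv j b)).trans
      le_order_mul
  rw [poisson_apply, sub_eq_add_neg]
  exact (le_min (h 1 2) ((h 2 1).trans_eq (order_neg _).symm)).trans min_order_le_add

theorem order_poisson_expD3_sub_expTrunc {D : R3 → R3} (hD : RaisesOrder D) (a b : R3) (N : ℕ) :
    ((N - 1 : ℕ) : ℕ∞) ≤
      (poisson (expD3 D a) (expD3 D b) - poisson (expTrunc D N a) (expTrunc D N b)).order := by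
  have hsplit : poisson (expD3 D a) (expD3 D b) - poisson (expTrunc D N a) (expTrunc D N b) =
      poisson (expD3 D a - expTrunc D N a) (expD3 D b) +
        poisson (expTrunc D N a) (expD3 D b - expTrunc D N b) := by
    simp only [map_sub, LinearMap.sub_apply]; abel
  have ha := order_poisson_ge (expD3 D a - expTrunc D N a) (expD3 D b)
  have hb := order_poisson_ge (expTrunc D N a) (expD3 D b - expTrunc D N b)
  rw [hsplit]
  refine le_trans (le_min ?_ ?_) min_order_le_add
  · refine le_trans ?_ ha
    push_cast
    exact le_add_right (tsub_le_tsub_right (order_expD3_sub_expTrunc hD a N) 1)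
  · refine le_trans ?_ hb
    push_cast
    exact le_add_left (tsub_le_tsub_right (order_expD3_sub_expTrunc hD b N) 1)

theorem map_expTrunc_expTrunc {F : Type*} [FunLike F R3 R3] [AddMonoidHomClass F R3 R3]
    (B : R3 →ₗ[ℂ] R3 →ₗ[ℂ] R3) (L : F) (D : R3 → R3)
    (hB : ∀ a b, L (B a b) = B (D a) b + B a (D b)) (a b : R3) (N : ℕ) :
    B (expTrunc D N a) (expTrunc D N b) = expTrunc L N (B a b) +
      ∑ ij ∈ range N ×ˢ range N with N ≤ ij.1 + ij.2,
        (((ij.1.factorial : ℂ))⁻¹ * ((ij.2.factorial : ℂ))⁻¹) • B (D^[ij.1] a) (D^[ij.2] b) := by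
  set T : ℕ → ℕ → R3 := fun i j =>
    (((i.factorial : ℂ))⁻¹ * ((j.factorial : ℂ))⁻¹) • B (D^[i] a) (D^[j] b)
  have hL : expTrunc L N (B a b) = ∑ n ∈ range N, ∑ ij ∈ antidiagonal n, T ij.1 ij.2 := by
    refine sum_congr rfl fun n _ => ?_
    rw [iterate_map_eq_sum_antidiagonal_choose L D D (fun a b => B a b) hB, smul_sum]
    refine sum_congr rfl fun ij hij => ?_
    obtain rfl := HasAntidiagonal.mem_antidiagonal.1 hij
    rw [← Nat.cast_smul_eq_nsmul ℂ, smul_smul, Nat.inv_factorial_add_mul_choose]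
  have hB : B (expTrunc D N a) (expTrunc D N b) = ∑ i ∈ range N, ∑ j ∈ range N, T i j := by
    simp only [expTrunc, map_sum, LinearMap.sum_apply, map_smul, LinearMap.smul_apply, smul_sum,
      smul_smul, T]
    rw [sum_comm]
    simp only [mul_comm]
  rw [hB, hL, sum_range_antidiagonal_eq_sum_filter, ← sum_product',
    ← sum_filter_add_sum_filter_not _ (fun ij : ℕ × ℕ => ij.1 + ij.2 < N)]
  simp only [not_lt, T]

def vf (g : Fin 3 → R3) : Derivation ℂ R3 R3 := ∑ i, g i • pderiv ℂ i

theorem vf_apply (g : Fin 3 → R3) (f : R3) : vf g f = ∑ i, g i * pderiv ℂ i f := by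
  simp [vf, Fin.sum_univ_three]

theorem VF_eq_vf (g : Fin 3 → R3) : VF g = vf g := by
  funext f
  simp [VF, vf_apply, pd_eq_pderiv]

theorem vf_X_zero (g : Fin 3 → R3) : vf g (X 0) = g 0 := by
  simp [vf_apply, Fin.sum_univ_three]

theorem raisesOrder_vf {g : Fin 3 → R3} (hg : ∀ i, 2 ≤ (g i).order) : RaisesOrder (vf g) := by
  intro f
  rw [vf_apply]
  refine le_order_sum _ _ fun i _ => le_trans ?_ le_order_mul
  calc f.order + 1 ≤ f.order - 1 + 1 + 1 := by gcongr; exact le_tsub_add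
    _ = 2 + (f.order - 1) := by ring
    _ ≤ _ := add_le_add (hg i) (order_sub_one_le_order_pderiv i f)

def divY (g : Fin 3 → R3) : R3 := pderiv ℂ 1 (g 1) + pderiv ℂ 2 (g 2)

/-- For `g 0 = 0`, `densityDeriv g f · dy₁∧dy₂` is the Lie derivative of `f · dy₁∧dy₂` along
`vf g`, modulo `dx`. -/
def densityDeriv (g : Fin 3 → R3) : R3 →ₗ[ℂ] R3 :=
  (vf g).toLinearMap + LinearMap.mulLeft ℂ (divY g)

theorem densityDeriv_apply (g : Fin 3 → R3) (f : R3) :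
    densityDeriv g f = vf g f + divY g * f := rfl

theorem densityDeriv_poisson {g : Fin 3 → R3} (h0 : g 0 = 0) (a b : R3) :
    densityDeriv g (poisson a b) = poisson (vf g a) b + poisson a (vf g b) := by
  have hvf : ∀ f, vf g f = g 1 * pderiv ℂ 1 f + g 2 * pderiv ℂ 2 f := fun f => by
    simp [vf_apply, Fin.sum_univ_three, h0]
  simp only [densityDeriv_apply, poisson_apply, hvf]
  simp only [divY, map_add, map_sub, Derivation.leibniz, smul_eq_mul, pderiv_comm (2 : Fin 3) 1]
  ring

theorem raisesOrder_densityDeriv {g : Fin 3 → R3} (hg : ∀ i, 2 ≤ (g i).order) :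
    RaisesOrder (densityDeriv g) := by
  refine (raisesOrder_vf hg).add_mul (le_trans ?_ min_order_le_add)
  have h : ∀ i, 1 ≤ (pderiv ℂ i (g i)).order := fun i =>
    calc (1 : ℕ∞) = 2 - 1 := rfl
      _ ≤ (g i).order - 1 := tsub_le_tsub_right (hg i) 1
      _ ≤ _ := order_sub_one_le_order_pderiv i (g i)
  exact le_min (h 1) (h 2)

theorem poisson_expD3 {g : Fin 3 → R3} (hg : ∀ i, 2 ≤ (g i).order) (h0 : g 0 = 0) (a b : R3) :
    poisson (expD3 (vf g) a) (expD3 (vf g) b) = expD3 (densityDeriv g) (poisson a b) := by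
  have hD := raisesOrder_vf hg
  rw [← sub_eq_zero, ← order_eq_top_iff, ENat.eq_top_iff_forall_ge]
  intro M
  -- Compare both sides with their truncations at `M + 2`; all discrepancies have order `≥ M`.
  have hterm : ∀ i j, M + 2 ≤ i + j → (M : ℕ∞) ≤
      ((((i.factorial : ℂ))⁻¹ * ((j.factorial : ℂ))⁻¹) •
        poisson ((vf g)^[i] a) ((vf g)^[j] b)).order := by
    intro i j hij
    refine le_trans ?_ (le_order_smul.trans' (order_poisson_ge _ _))
    have : M ≤ (i - 1) + (j - 1) := by omega
    calc (M : ℕ∞) ≤ ((i : ℕ∞) - 1) + ((j : ℕ∞) - 1) := by exact_mod_cast this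
      _ ≤ _ := by gcongr <;> exact le_add_self.trans (hD.le_order_iterate _ _)
  have hsplit :=
    map_expTrunc_expTrunc poisson (densityDeriv g) (vf g) (densityDeriv_poisson h0) a b (M + 2)
  set R := ∑ ij ∈ range (M + 2) ×ˢ range (M + 2) with M + 2 ≤ ij.1 + ij.2,
    (((ij.1.factorial : ℂ))⁻¹ * ((ij.2.factorial : ℂ))⁻¹) •
      poisson ((vf g)^[ij.1] a) ((vf g)^[ij.2] b)
  have hR : (M : ℕ∞) ≤ R.order := le_order_sum _ _ fun ij hij => hterm _ _ (mem_filter.1 hij).2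
  have hX := order_poisson_expD3_sub_expTrunc hD a b (M + 2)
  have hY := order_expD3_sub_expTrunc (raisesOrder_densityDeriv hg) (poisson a b) (M + 2)
  have hdecomp :
      poisson (expD3 (vf g) a) (expD3 (vf g) b) - expD3 (densityDeriv g) (poisson a b) =
      (poisson (expD3 (vf g) a) (expD3 (vf g) b) - poisson (expTrunc (vf g) (M + 2) a)
        (expTrunc (vf g) (M + 2) b)) + R +
      -(expD3 (densityDeriv g) (poisson a b) - expTrunc (densityDeriv g) (M + 2) (poisson a b)) := by
    rw [hsplit]; abel
  rw [hdecomp]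
  refine le_trans (le_min (le_trans (le_min (le_trans ?_ hX) hR) min_order_le_add) ?_)
    min_order_le_add
  · exact_mod_cast (by omega : M ≤ M + 2 - 1)
  · rw [order_neg]
    exact le_trans (by simp) hY

theorem two_le_order_of_mem_mI_sq {f : R3} (hf : f ∈ mI ^ 2) : 2 ≤ f.order := by
  rw [pow_two] at hf
  refine Submodule.mul_induction_on hf (fun a ha b hb => ?_) fun a b ha hb => ?_
  · have h1 : ∀ c ∈ mI, 1 ≤ c.order := fun c hc =>
      one_le_order_iff_constCoeff_eq_zero.2 (RingHom.mem_ker.1 hc)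
    exact (add_le_add (h1 a ha) (h1 b hb)).trans le_order_mul
  · exact (le_min ha hb).trans min_order_le_add

theorem poisson_expD3_X_eq_one_iff {g : Fin 3 → R3} (hg : ∀ i, 2 ≤ (g i).order) (h0 : g 0 = 0) :
    poisson (expD3 (vf g) (X 1)) (expD3 (vf g) (X 2)) = 1 ↔ divY g = 0 := by
  rw [poisson_expD3 hg h0, poisson_X_one_X_two, expD3_eq_self_iff (raisesOrder_densityDeriv hg),
    densityDeriv_apply, Derivation.map_one_eq_zero, mul_one, zero_add]

/-- **`exp(F)` is transversally symplectic iff `F` is transversally Hamiltonian with zero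
`x`-component**, i.e. `g₀ = 0` and `∂g₁/∂y₁ + ∂g₂/∂y₂ = 0`. -/
theorem exp_transversally_symplectic_iff
    (g : Fin 3 → R3) (hg : ∀ i, g i ∈ mI ^ 2) :
    TransSymp (fun i => expD3 (VF g) (Xv i)) ↔
      (g 0 = 0 ∧ pd 1 (g 1) + pd 2 (g 2) = 0) := by
  have hg2 : ∀ i, 2 ≤ (g i).order := fun i => two_le_order_of_mem_mI_sq (hg i)
  simp only [TransSymp, Xv, VF_eq_vf, pd_eq_pderiv, ← poisson_apply]
  rw [expD3_eq_self_iff (raisesOrder_vf hg2), vf_X_zero]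
  exact and_congr_right fun h0 => poisson_expD3_X_eq_one_iff hg2 h0

end
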